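/- arXiv:2212.14642 — 3 statements merged into one kernel-verified Lean document; each statement's English description precedes it below -/
import Mathlib

section
/- Let A, B, C be groups with injective homomorphisms α: C → A and β: C → B, and form the amalgamated free product A *_C B. If the natural homomorphism A → A *_C B is surjective, then β: C → B is surjective. -/
/-! If `of i` is onto, every `of j g` lies in `range (of i) ⊓ range (of j)`, which by the normal
form theorem is the image of the base group; as `of j` is injective, `g` lies in `range (φ j)`. -/

namespace Monoid.PushoutI

variable {ι : Type*} {G : ι → Type*} [∀ i, Group (G i)] {H : Type*} [Group H]
  {φ : ∀ i, H →* G i}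

theorem mem_range_of_of_mem_range_of (hφ : ∀ i, Function.Injective (φ i)) {i j : ι}
    (hij : i ≠ j) {g : G j} (hg : of (φ := φ) j g ∈ (of (φ := φ) i).range) :
    g ∈ (φ j).range := by
  have hbase : of (φ := φ) j g ∈ (base φ).range := by
    rw [← inf_of_range_eq_base_range hφ hij]
    exact ⟨hg, g, rfl⟩
  obtain ⟨c, hc⟩ := hbase
  exact ⟨c, of_injective hφ j (by rw [of_apply_eq_base, hc])⟩

theorem surjective_of_surjective_of_ne (hφ : ∀ i, Function.Injective (φ i)) {i j : ι}
    (hij : i ≠ j) (hsurj : Function.Surjective (of (φ := φ) i)) :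
    Function.Surjective (φ j) := fun g =>
  mem_range_of_of_mem_range_of hφ hij (hsurj (of j g))

end Monoid.PushoutI

/-- if in the amalgamated free product `A *_C B` (with `A = G true`,
`B = G false`, amalgamated over `C` along injective homomorphisms `φ`), the natural
homomorphism from `A` is surjective, then `β = φ false : C → B` is surjective. -/
theorem stmt0 {C : Type} [Group C] {G : Bool → Type} [∀ i, Group (G i)]
    (φ : ∀ i, C →* G i)
    (hα : Function.Injective (φ true)) (hβ : Function.Injective (φ false))
    (hsurj : Function.Surjective (Monoid.PushoutI.of (φ := φ) true)) :
    Function.Surjective (φ false) :=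
  Monoid.PushoutI.surjective_of_surjective_of_ne (Bool.forall_bool.2 ⟨hβ, hα⟩)
    (by decide) hsurj
end

section
/- Let A, B, C be groups with injective homomorphisms α: C → A and β: C → B. In the amalgamated free product A *_C B, the natural maps from A and from B into A *_C B are injective. -/
/-- the natural maps from `A = G true` and `B = G false` into the
amalgamated free product `A *_C B` (over injective `α = φ true`, `β = φ false`)
are injective. -/
theorem stmt1 {C : Type} [Group C] {G : Bool → Type} [∀ i, Group (G i)]
    (φ : ∀ i, C →* G i)
    (hα : Function.Injective (φ true)) (hβ : Function.Injective (φ false)) :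
    Function.Injective (Monoid.PushoutI.of (φ := φ) true) ∧
      Function.Injective (Monoid.PushoutI.of (φ := φ) false) := by
  have hφ : ∀ i, Function.Injective (φ i) := Bool.forall_bool.2 ⟨hβ, hα⟩
  exact ⟨Monoid.PushoutI.of_injective hφ true, Monoid.PushoutI.of_injective hφ false⟩
end

section
/- Let K be a compact attractor for a homeomorphism f of a locally compact, locally connected metric space, with basin A(K). Then K has finitely many connected components K₁, …, K_r, f permutes these components, and each component of K is invariant under f^{r!} and is an attractor for f^{r!} whose basin is the connected component of A(K) containing it. -/
open Filter Topology

/-- `K` is an attractor for the map `f` with basin of attraction `A`. -/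
def IsAttractorWithBasin {X : Type*} [TopologicalSpace X] (f : X → X)
    (K A : Set X) : Prop :=
  IsCompact K ∧ f '' K = K ∧
    (∀ V ∈ 𝓝ˢ K, ∃ W ∈ 𝓝ˢ K, ∀ n : ℕ, f^[n] '' W ⊆ V) ∧
    A ∈ 𝓝ˢ K ∧ A = {p | ∀ V ∈ 𝓝ˢ K, ∀ᶠ n in atTop, f^[n] p ∈ V}

/-!
The basin `A` is open, so the compact set `K` meets only finitely many components of `A`, and the
homeomorphism `f` permutes them. Hence each such component `U` is mapped onto itself by some
`f^[t]` with `t > 0`, and `K ∩ U` is then an attractor of `f^[t]` with basin `U`. An attractor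
with a connected basin is connected: a compact connected neighbourhood `D` of it inside the basin
is mapped into itself by a power of the map, and the attractor is the decreasing intersection of
the images of `D`. So the components of `K` are exactly the sets `K ∩ U`; there are finitely many,
`f` permutes them, and `f^[r!]` fixes each of them.
-/

open Set Function

theorem Function.Injective.mem_periodicPts_of_iterate_mem {α : Type*} {f : α → α}
    (hf : Injective f) {s : Set α} (hs : s.Finite) {x : α} (hx : ∀ n, f^[n] x ∈ s) :
    x ∈ periodicPts f := by
  obtain ⟨m, n, hmn, hfmn⟩ := hs.exists_lt_map_eq_of_forall_mem hx
  exact mk_mem_periodicPts (Nat.sub_pos_of_lt hmn) (iterate_cancel hf hfmn.symm)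

section Topology

variable {X : Type*} [TopologicalSpace X]

theorem isPreconnected_iInter_of_directed [T2Space X] {ι : Type*} [Nonempty ι] {Q : ι → Set X}
    (hQ : Directed (· ⊇ ·) Q) (hc : ∀ i, IsCompact (Q i)) (hp : ∀ i, IsPreconnected (Q i)) :
    IsPreconnected (⋂ i, Q i) := by
  have hI : IsClosed (⋂ i, Q i) := isClosed_iInter fun i => (hc i).isClosed
  have hIc : IsCompact (⋂ i, Q i) := (hc (Classical.arbitrary ι)).of_isClosed_subset hI
    (iInter_subset _ _)
  refine (isPreconnected_iff_subset_of_fully_disjoint_closed hI).2 fun u v hu hv huv hdisj => ?_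
  obtain ⟨u', v', hu', hv', huu', hvv', hdisj'⟩ := SeparatedNhds.of_isCompact_isCompact
    (hIc.inter_right hu) (hIc.inter_right hv) (hdisj.mono inter_subset_right inter_subset_right)
  have hIuv : ⋂ i, Q i ⊆ u' ∪ v' := fun z hz =>
    (huv hz).imp (fun hzu => huu' ⟨hz, hzu⟩) fun hzv => hvv' ⟨hz, hzv⟩
  obtain ⟨i, hi⟩ := exists_subset_nhds_of_isCompact hQ hc fun z hz =>
    (hu'.union hv').mem_nhds (hIuv hz)
  rcases (hp i).subset_or_subset hu' hv' hdisj' hi with hiu | hiv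
  · refine Or.inl fun z hz => (huv hz).resolve_right fun hzv => ?_
    exact hdisj'.ne_of_mem (hiu (mem_iInter.1 hz i)) (hvv' ⟨hz, hzv⟩) rfl
  · refine Or.inr fun z hz => (huv hz).resolve_left fun hzu => ?_
    exact hdisj'.ne_of_mem (huu' ⟨hz, hzu⟩) (hiv (mem_iInter.1 hz i)) rfl

section LocallyConnected

variable [LocallyConnectedSpace X]

theorem exists_isCompact_isPreconnected_mem_nhds [T2Space X] [LocallyCompactSpace X]
    {U : Set X} {x : X} (hU : U ∈ 𝓝 x) :
    ∃ N ∈ 𝓝 x, IsCompact N ∧ IsPreconnected N ∧ N ⊆ U := by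
  obtain ⟨M, hM, hMU, hMc⟩ := local_compact_nhds hU
  obtain ⟨V, hVM, hVo, hxV, hV⟩ :=
    locallyConnectedSpace_iff_subsets_isOpen_isConnected.1 ‹_› x M hM
  have hVM' : closure V ⊆ M := closure_minimal hVM hMc.isClosed
  exact ⟨closure V, mem_of_superset (hVo.mem_nhds hxV) subset_closure,
    hMc.of_isClosed_subset isClosed_closure hVM', hV.isPreconnected.closure, hVM'.trans hMU⟩

theorem IsPreconnected.exists_isCompact_isPreconnected_mem_nhds [T2Space X]
    [LocallyCompactSpace X] {U : Set X} (hU : IsPreconnected U) (hUo : IsOpen U) {x y : X}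
    (hx : x ∈ U) (hy : y ∈ U) :
    ∃ S, IsCompact S ∧ IsPreconnected S ∧ S ⊆ U ∧ x ∈ S ∧ S ∈ 𝓝 y := by
  refine hU.induction₂'
    (fun x y => ∃ S, IsCompact S ∧ IsPreconnected S ∧ S ⊆ U ∧ x ∈ S ∧ S ∈ 𝓝 y)
    (fun z hz => ?_) (fun a b c _ _ _ => ?_) hx hy
  · obtain ⟨N, hN, hNc, hNp, hNU⟩ :=
      _root_.exists_isCompact_isPreconnected_mem_nhds (hUo.mem_nhds hz)
    filter_upwards [nhdsWithin_le_nhds (interior_mem_nhds.2 hN)] with w hw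
    exact ⟨⟨N, hNc, hNp, hNU, mem_of_mem_nhds hN, mem_interior_iff_mem_nhds.1 hw⟩,
      ⟨N, hNc, hNp, hNU, interior_subset hw, hN⟩⟩
  · rintro ⟨S, hSc, hSp, hSU, haS, hSb⟩ ⟨T, hTc, hTp, hTU, hbT, hTc'⟩
    exact ⟨S ∪ T, hSc.union hTc, hSp.union b (mem_of_mem_nhds hSb) hbT hTp,
      union_subset hSU hTU, Or.inl haS, mem_of_superset hTc' subset_union_right⟩

theorem IsPreconnected.exists_isCompact_isPreconnected_superset [T2Space X]
    [LocallyCompactSpace X] {U C : Set X} (hU : IsPreconnected U) (hUo : IsOpen U)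
    (hC : IsCompact C) (hCU : C ⊆ U) :
    ∃ D, IsCompact D ∧ IsPreconnected D ∧ C ⊆ interior D ∧ D ⊆ U := by
  obtain rfl | ⟨x₀, hx₀⟩ := C.eq_empty_or_nonempty
  · exact ⟨∅, isCompact_empty, isPreconnected_empty, empty_subset _, empty_subset _⟩
  choose! S hSc hSp hSU hx₀S hS using fun y (hy : y ∈ C) =>
    hU.exists_isCompact_isPreconnected_mem_nhds hUo (hCU hx₀) (hCU hy)
  obtain ⟨t, htC, hCt⟩ := hC.elim_nhds_subcover (fun y => interior (S y))
    fun y hy => interior_mem_nhds.2 (hS y hy)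
  refine ⟨⋃ y ∈ t, S y, t.isCompact_biUnion fun y hy => hSc y (htC y hy), ?_, ?_,
    iUnion₂_subset fun y hy => hSU y (htC y hy)⟩
  · rw [← Finset.set_biUnion_coe, ← sUnion_image]
    exact isPreconnected_sUnion x₀ _ (forall_mem_image.2 fun y hy => hx₀S y (htC y hy))
      (forall_mem_image.2 fun y hy => hSp y (htC y hy))
  · exact hCt.trans (iUnion₂_subset fun y hy => interior_mono (subset_biUnion_of_mem hy))

theorem isOpen_diff_connectedComponentIn {A : Set X} (hA : IsOpen A) (x : X) :
    IsOpen (A \ connectedComponentIn A x) := by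
  refine isOpen_iff_forall_mem_open.2 fun z ⟨hzA, hzx⟩ => ⟨connectedComponentIn A z,
    fun w hw => ⟨connectedComponentIn_subset _ _ hw, fun hwx => hzx ?_⟩,
    hA.connectedComponentIn, mem_connectedComponentIn hzA⟩
  rw [connectedComponentIn_eq hwx, ← connectedComponentIn_eq hw]
  exact mem_connectedComponentIn hzA

theorem IsCompact.exists_finset_connectedComponentIn_eq {K A : Set X} (hK : IsCompact K)
    (hA : IsOpen A) (hKA : K ⊆ A) :
    ∃ T : Finset X, ↑T ⊆ K ∧
      ∀ x ∈ K, ∃ y ∈ T, connectedComponentIn A x = connectedComponentIn A y := by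
  obtain ⟨T, hTK, hKT⟩ := hK.elim_nhds_subcover (connectedComponentIn A)
    fun y hy => hA.connectedComponentIn.mem_nhds (mem_connectedComponentIn (hKA hy))
  refine ⟨T, hTK, fun x hx => ?_⟩
  obtain ⟨y, hyT, hxy⟩ := mem_iUnion₂.1 (hKT hx)
  exact ⟨y, hyT, (connectedComponentIn_eq hxy).symm⟩

end LocallyConnected

theorem Homeomorph.image_iterate_connectedComponentIn (f : X ≃ₜ X) {s : Set X} (hs : f '' s = s)
    {x : X} (hx : x ∈ s) (n : ℕ) :
    f^[n] '' connectedComponentIn s x = connectedComponentIn s (f^[n] x) := by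
  induction n with
  | zero => simp
  | succ n ih =>
    rw [iterate_succ_apply', iterate_succ', image_comp, ih,
      f.image_connectedComponentIn ((mapsTo_iff_image_subset.2 hs.subset).iterate n hx), hs]

theorem coe_mem_connectedComponentIn_iff {s : Set X} {a b : s} :
    (a : X) ∈ connectedComponentIn s b ↔ a ∈ connectedComponent b := by
  rw [connectedComponentIn_eq_image b.2, Subtype.val_injective.mem_set_image]

theorem Continuous.iterate_factorial_card_mem_connectedComponent
    [Finite (ConnectedComponents X)] {g : X → X} (hg : Continuous g) (hgs : Surjective g)
    (x : X) :
    g^[(Nat.card (ConnectedComponents X)).factorial] x ∈ connectedComponent x := by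
  have := Fintype.ofFinite (ConnectedComponents X)
  have hsemi : Semiconj ConnectedComponents.mk g hg.connectedComponentsMap :=
    hg.connectedComponentsMap_mk
  have hper := isPeriodicPt_factorial_card_of_mem_periodicPts
    ((Finite.injective_iff_surjective.2 (hg.connectedComponentsMap_surjective hgs)).mem_periodicPts
      (ConnectedComponents.mk x))
  rw [Nat.card_eq_fintype_card, ← ConnectedComponents.coe_eq_coe', hsemi.iterate_right]
  exact hper

theorem Continuous.iterate_factorial_card_mem_connectedComponentIn {g : X → X} (hg : Continuous g)
    {s : Set X} (hs : g '' s = s) [Finite (ConnectedComponents s)] {x : X} (hx : x ∈ s) :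
    g^[(Nat.card (ConnectedComponents s)).factorial] x ∈ connectedComponentIn s x := by
  have hmaps : MapsTo g s s := mapsTo_iff_image_subset.2 hs.subset
  have := (hg.restrict hmaps).iterate_factorial_card_mem_connectedComponent
    (hmaps.restrict_surjective_iff.2 hs.ge) ⟨x, hx⟩
  rwa [← coe_mem_connectedComponentIn_iff, hmaps.coe_iterate_restrict] at this

end Topology

namespace IsAttractorWithBasin

section

variable {X : Type*} [TopologicalSpace X] {g : X → X} {K A : Set X}

theorem mem_basin_iff (h : IsAttractorWithBasin g K A) {p : X} :
    p ∈ A ↔ ∀ V ∈ 𝓝ˢ K, ∀ᶠ n in atTop, g^[n] p ∈ V := by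
  rw [h.2.2.2.2]
  rfl

theorem subset_basin (h : IsAttractorWithBasin g K A) : K ⊆ A :=
  subset_of_mem_nhdsSet h.2.2.2.1

theorem mapsTo (h : IsAttractorWithBasin g K A) : MapsTo g K K :=
  mapsTo_iff_image_subset.2 h.2.1.subset

theorem image_iterate (h : IsAttractorWithBasin g K A) (n : ℕ) : g^[n] '' K = K := by
  rw [image_iterate_eq]
  exact IsFixedPt.iterate h.2.1 n

theorem preimage_iterate_basin (h : IsAttractorWithBasin g K A) (m : ℕ) : g^[m] ⁻¹' A = A := by
  ext p
  simp only [mem_preimage, h.mem_basin_iff, ← iterate_add_apply]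
  refine forall₂_congr fun V _ =>
    ⟨fun hp => ?_, fun hp => (tendsto_add_atTop_nat m).eventually hp⟩
  filter_upwards [(tendsto_sub_atTop_nat m).eventually hp, eventually_ge_atTop m] with n hn hmn
  rwa [Nat.sub_add_cancel hmn] at hn

theorem image_basin (h : IsAttractorWithBasin g K A) (hg : Surjective g) : g '' A = A := by
  conv_lhs => rw [← h.preimage_iterate_basin 1]
  exact image_preimage_eq A hg

theorem isOpen_basin (h : IsAttractorWithBasin g K A) (hg : Continuous g) : IsOpen A := by
  obtain ⟨U, hUo, hKU, hUA⟩ := mem_nhdsSet_iff_exists.1 h.2.2.2.1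
  refine isOpen_iff_mem_nhds.2 fun p hp => ?_
  obtain ⟨n, hn⟩ := (h.mem_basin_iff.1 hp U (hUo.mem_nhdsSet.2 hKU)).exists
  rw [← h.preimage_iterate_basin n]
  exact mem_of_superset ((hg.iterate n).continuousAt.preimage_mem_nhds (hUo.mem_nhds hn))
    (preimage_mono hUA)

theorem eventually_mapsTo (h : IsAttractorWithBasin g K A) (hg : Continuous g) {C V : Set X}
    (hC : IsCompact C) (hCA : C ⊆ A) (hV : V ∈ 𝓝ˢ K) :
    ∀ᶠ n in atTop, MapsTo g^[n] C V := by
  obtain ⟨W, hW, hWV⟩ := h.2.2.1 V hV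
  obtain ⟨U, hUo, hKU, hUW⟩ := mem_nhdsSet_iff_exists.1 hW
  choose! m hm using fun c (hc : c ∈ C) =>
    (h.mem_basin_iff.1 (hCA hc) U (hUo.mem_nhdsSet.2 hKU)).exists
  obtain ⟨t, htC, hCt⟩ := hC.elim_nhds_subcover (fun c => g^[m c] ⁻¹' U)
    fun c hc => (hUo.preimage (hg.iterate _)).mem_nhds (hm c hc)
  filter_upwards [eventually_ge_atTop (t.sup m)] with n hn c hc
  obtain ⟨y, hyt, hy⟩ := mem_iUnion₂.1 (hCt hc)
  rw [← Nat.sub_add_cancel ((Finset.le_sup hyt).trans hn), iterate_add_apply]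
  exact hWV _ (mem_image_of_mem _ (hUW hy))

theorem isPreconnected [T2Space X] [LocallyCompactSpace X] [LocallyConnectedSpace X]
    (h : IsAttractorWithBasin g K A) (hg : Continuous g) (hA : IsPreconnected A) :
    IsPreconnected K := by
  obtain ⟨D, hDc, hDp, hKD, hDA⟩ :=
    hA.exists_isCompact_isPreconnected_superset (h.isOpen_basin hg) h.1 h.subset_basin
  obtain ⟨m, hm⟩ := (h.eventually_mapsTo hg hDc hDA
    (isOpen_interior.mem_nhdsSet.2 hKD)).exists_forall_of_atTop
  -- a positive power of `g` maps `D` into itself; its images of `D` shrink down to `K`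
  set N := m + 1
  have hND : MapsTo g^[N] D D := (hm N m.le_succ).mono_right interior_subset
  set Q : ℕ → Set X := fun k => g^[N * k] '' D
  have hQ : Antitone Q := antitone_nat_of_succ_le fun k => by
    simp only [Q, Nat.mul_succ, iterate_add, image_comp]
    exact image_mono hND.image_subset
  have hKQ : K = ⋂ k, Q k := by
    refine (subset_iInter fun k => ?_).antisymm fun z hz => ?_
    · rw [← h.image_iterate (N * k)]
      exact image_mono (hKD.trans interior_subset)
    · by_contra hzK
      have hzK' : {z}ᶜ ∈ 𝓝ˢ K :=
        isOpen_compl_singleton.mem_nhdsSet.2 (subset_compl_singleton_iff.2 hzK)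
      obtain ⟨k, hk⟩ := ((tendsto_id.const_mul_atTop' m.succ_pos).eventually
        (h.eventually_mapsTo hg hDc hDA hzK')).exists
      obtain ⟨d, hd, rfl⟩ := mem_iInter.1 hz k
      exact hk hd rfl
  rw [hKQ]
  exact isPreconnected_iInter_of_directed hQ.directed_ge
    (fun k => hDc.image (hg.iterate _)) fun k => hDp.image _ (hg.iterate _).continuousOn

theorem union_diff_mem_nhdsSet (h : IsAttractorWithBasin g K A) {U V : Set X}
    (hAU : IsOpen (A \ U)) (hV : V ∈ 𝓝ˢ (K ∩ U)) : V ∪ (A \ U) ∈ 𝓝ˢ K := by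
  have hK : K ⊆ (K ∩ U) ∪ (A \ U) := fun x hx => by
    by_cases hxU : x ∈ U
    exacts [Or.inl ⟨hx, hxU⟩, Or.inr ⟨h.subset_basin hx, hxU⟩]
  refine nhdsSet_mono hK ?_
  rw [nhdsSet_union]
  exact union_mem_sup hV (hAU.mem_nhdsSet.2 subset_rfl)

theorem iterate_inter (h : IsAttractorWithBasin g K A) (hg : Injective g) {t : ℕ} (ht : 0 < t)
    {U : Set X} (hUo : IsOpen U) (hAU : IsOpen (A \ U)) (hUA : U ⊆ A) (hU : g^[t] '' U = U) :
    IsAttractorWithBasin g^[t] (K ∩ U) U := by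
  have hUn (n : ℕ) : (g^[t])^[n] '' U = U := by
    rw [image_iterate_eq]
    exact IsFixedPt.iterate hU n
  have hVU {V : Set X} : (V ∪ (A \ U)) ∩ U ⊆ V := fun z ⟨hz, hzU⟩ =>
    hz.resolve_right fun hz' => hz'.2 hzU
  have hKU : U ∈ 𝓝ˢ (K ∩ U) := hUo.mem_nhdsSet.2 inter_subset_right
  refine ⟨?_, ?_, fun V hV => ?_, hKU, ?_⟩
  · have : K ∩ U = K \ (A \ U) := Set.ext fun x =>
      ⟨fun ⟨hx, hxU⟩ => ⟨hx, fun hx' => hx'.2 hxU⟩, fun ⟨hx, hx'⟩ =>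
        ⟨hx, by_contra fun hxU => hx' ⟨h.subset_basin hx, hxU⟩⟩⟩
    rw [this]
    exact h.1.diff hAU
  · rw [image_inter (hg.iterate t), h.image_iterate, hU]
  · obtain ⟨W, hW, hWV⟩ := h.2.2.1 _ (h.union_diff_mem_nhdsSet hAU hV)
    refine ⟨W ∩ U, inter_mem (nhdsSet_mono inter_subset_left hW) hKU, fun n => ?_⟩
    calc (g^[t])^[n] '' (W ∩ U) ⊆ (g^[t])^[n] '' W ∩ U :=
          (image_inter_subset _ _ _).trans (inter_subset_inter_right _ (hUn n).subset)
      _ ⊆ V := (inter_subset_inter_left _ (by rw [← iterate_mul]; exact hWV _)).trans hVU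
  · ext p
    refine ⟨fun hp V hV => ?_, fun hp => ?_⟩
    · filter_upwards [(tendsto_id.const_mul_atTop' ht).eventually
        (h.mem_basin_iff.1 (hUA hp) _ (h.union_diff_mem_nhdsSet hAU hV))] with n hn
      rw [iterate_mul] at hn
      exact hVU ⟨hn, hUn n ▸ mem_image_of_mem _ hp⟩
    · obtain ⟨n, hn⟩ := (hp U hKU).exists
      rw [← hUn n] at hn
      exact ((hg.iterate t).iterate n).mem_set_image.1 hn

end

section Homeomorph

variable {X : Type*} [TopologicalSpace X] [LocallyConnectedSpace X] {f : X ≃ₜ X} {K A : Set X}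

theorem exists_pos_image_iterate_connectedComponentIn_eq (h : IsAttractorWithBasin f K A)
    {x : X} (hx : x ∈ K) :
    ∃ t, 0 < t ∧ f^[t] '' connectedComponentIn A x = connectedComponentIn A x := by
  obtain ⟨T, hTK, hT⟩ :=
    h.1.exists_finset_connectedComponentIn_eq (h.isOpen_basin f.continuous) h.subset_basin
  have hper : connectedComponentIn A x ∈ periodicPts (image f) := by
    refine (image_injective.2 f.injective).mem_periodicPts_of_iterate_mem
      (T.finite_toSet.image (connectedComponentIn A)) fun n => ?_
    rw [← image_iterate_eq, f.image_iterate_connectedComponentIn (h.image_basin f.surjective)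
      (h.subset_basin hx)]
    obtain ⟨y, hyT, hy⟩ := hT _ (h.mapsTo.iterate n hx)
    exact ⟨y, hyT, hy.symm⟩
  obtain ⟨t, ht, hxt⟩ := mem_periodicPts.1 hper
  exact ⟨t, ht, by rwa [image_iterate_eq]⟩

variable [T2Space X] [LocallyCompactSpace X]

theorem connectedComponentIn_eq_inter (h : IsAttractorWithBasin f K A) {x : X} (hx : x ∈ K) :
    connectedComponentIn K x = K ∩ connectedComponentIn A x := by
  obtain ⟨t, ht, hxt⟩ := h.exists_pos_image_iterate_connectedComponentIn_eq hx
  have hA := h.isOpen_basin f.continuous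
  have hKx : IsPreconnected (K ∩ connectedComponentIn A x) :=
    (h.iterate_inter f.injective ht hA.connectedComponentIn
      (isOpen_diff_connectedComponentIn hA x) (connectedComponentIn_subset _ _) hxt).isPreconnected
      (f.continuous.iterate t) isPreconnected_connectedComponentIn
  exact (subset_inter (connectedComponentIn_subset _ _)
    (connectedComponentIn_mono _ h.subset_basin)).antisymm
    (hKx.subset_connectedComponentIn ⟨hx, mem_connectedComponentIn (h.subset_basin hx)⟩
      inter_subset_left)

theorem finite_connectedComponents (h : IsAttractorWithBasin f K A) :
    Finite (ConnectedComponents K) := by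
  obtain ⟨T, hTK, hT⟩ :=
    h.1.exists_finset_connectedComponentIn_eq (h.isOpen_basin f.continuous) h.subset_basin
  refine Finite.of_surjective (fun y : T => ConnectedComponents.mk (⟨y, hTK y.2⟩ : K))
    (ConnectedComponents.surjective_coe.forall.2 fun a => ?_)
  obtain ⟨y, hyT, hay⟩ := hT a a.2
  refine ⟨⟨y, hyT⟩, (ConnectedComponents.coe_eq_coe'.2 ?_).symm⟩
  rw [← coe_mem_connectedComponentIn_iff, h.connectedComponentIn_eq_inter (hTK hyT), ← hay]
  exact ⟨a.2, mem_connectedComponentIn (h.subset_basin a.2)⟩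

end Homeomorph

end IsAttractorWithBasin

/-- a compact attractor `K` of a homeomorphism `f` of a locally
compact, locally connected metric space has finitely many connected components,
`f` permutes these components, and (with `r` the number of components) each
component is invariant under `f^(r!)` and is an attractor for `f^(r!)` whose
basin is the connected component of `A` containing it. -/
theorem stmt14 {X : Type} [MetricSpace X] [LocallyCompactSpace X]
    [LocallyConnectedSpace X] (f : X ≃ₜ X) (K A : Set X)
    (h : IsAttractorWithBasin (⇑f) K A) :
    Finite (ConnectedComponents ↥K) ∧
    (∀ x ∈ K, ⇑f '' connectedComponentIn K x = connectedComponentIn K (f x)) ∧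
    (∀ r : ℕ, r = Nat.card (ConnectedComponents ↥K) → ∀ x ∈ K,
      (⇑f)^[r.factorial] '' connectedComponentIn K x = connectedComponentIn K x ∧
      IsAttractorWithBasin ((⇑f)^[r.factorial]) (connectedComponentIn K x)
        (connectedComponentIn A x)) := by
  have hfin := h.finite_connectedComponents
  have hA := h.isOpen_basin f.continuous
  refine ⟨hfin, fun x hx => by rw [f.image_connectedComponentIn hx, h.2.1], ?_⟩
  rintro r rfl x hx
  have hfix := f.continuous.iterate_factorial_card_mem_connectedComponentIn h.2.1 hx
  refine ⟨by rw [f.image_iterate_connectedComponentIn h.2.1 hx, ← connectedComponentIn_eq hfix],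
    ?_⟩
  rw [h.connectedComponentIn_eq_inter hx]
  refine h.iterate_inter f.injective (Nat.factorial_pos _) hA.connectedComponentIn
    (isOpen_diff_connectedComponentIn hA x) (connectedComponentIn_subset _ _) ?_
  rw [f.image_iterate_connectedComponentIn (h.image_basin f.surjective) (h.subset_basin hx),
    ← connectedComponentIn_eq (connectedComponentIn_mono _ h.subset_basin hfix)]
end
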